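/- Let S = {x ∈ ℝ^n : ∃ z ∈ ℝ^m, A + Σᵢ xᵢBᵢ + Σⱼ zⱼCⱼ ⪰ 0} for real symmetric k×k matrices A, Bᵢ, Cⱼ, and define C = {x ∈ ℝ^n : ∃ λ, r ∈ ℝ, ∃ z ∈ ℝ^m, λA + Σᵢ xᵢBᵢ + Σⱼ zⱼCⱼ ⪰ 0 and for every i = 1, …, n the 2×2 matrix [[λ, xᵢ],[xᵢ, r]] ⪰ 0}. Then C equals the conic hull cc(S) of S (the smallest convex cone containing S). -/

import Mathlib

/-- The conic hull of `S`: all nonnegative combinations of elements of `S`. -/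
def conicHullSet {n : ℕ} (S : Set (Fin n → ℝ)) : Set (Fin n → ℝ) :=
  {x | ∃ (N : ℕ) (c : Fin N → ℝ) (s : Fin N → (Fin n → ℝ)),
    (∀ i, 0 ≤ c i) ∧ (∀ i, s i ∈ S) ∧ x = ∑ i, c i • s i}

lemma psd_add' {k : ℕ} {M N : Matrix (Fin k) (Fin k) ℝ} (hM : M.PosSemidef)
    (hN : N.PosSemidef) : (M + N).PosSemidef :=
  Matrix.posSemidef_iff_dotProduct_mulVec.2 ⟨hM.1.add hN.1, fun x => by
    simp only [Matrix.add_mulVec, dotProduct_add]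
    exact add_nonneg ((Matrix.posSemidef_iff_dotProduct_mulVec.1 hM).2 x)
      ((Matrix.posSemidef_iff_dotProduct_mulVec.1 hN).2 x)⟩

lemma psd_smul' {k : ℕ} {M : Matrix (Fin k) (Fin k) ℝ} (hM : M.PosSemidef) {c : ℝ}
    (hc : 0 ≤ c) : (c • M).PosSemidef := by
  refine Matrix.posSemidef_iff_dotProduct_mulVec.2 ⟨?_, fun x => ?_⟩
  · rw [Matrix.IsHermitian, Matrix.conjTranspose_smul, star_trivial, hM.1]
  · simp only [Matrix.smul_mulVec, dotProduct_smul, smul_eq_mul]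
    exact mul_nonneg hc ((Matrix.posSemidef_iff_dotProduct_mulVec.1 hM).2 x)

lemma psd_sum' {k N : ℕ} {f : Fin N → Matrix (Fin k) (Fin k) ℝ}
    (h : ∀ p, (f p).PosSemidef) : (∑ p, f p).PosSemidef :=
  Finset.sum_induction f _ (fun _ _ ha hb => psd_add' ha hb) Matrix.PosSemidef.zero
    (fun p _ => h p)

lemma psd2_mk {a b c : ℝ} (ha : 0 ≤ a) (hc : 0 ≤ c) (h : b^2 ≤ a*c) :
    (!![a,b;b,c] : Matrix (Fin 2) (Fin 2) ℝ).PosSemidef := by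
  rw [Matrix.posSemidef_iff_dotProduct_mulVec]
  constructor
  · ext i j
    fin_cases i <;> fin_cases j <;> simp [Matrix.conjTranspose_apply]
  · intro v
    simp [Matrix.mulVec, dotProduct, Fin.sum_univ_two]
    rcases eq_or_lt_of_le ha with rfl | h0
    · have hb : b = 0 := by nlinarith
      subst hb
      nlinarith [mul_nonneg hc (sq_nonneg (v 1))]
    · nlinarith [sq_nonneg (a * v 0 + b * v 1), mul_nonneg (sub_nonneg.2 h) (sq_nonneg (v 1))]

lemma psd2_elim {a b c : ℝ} (h : (!![a,b;b,c] : Matrix (Fin 2) (Fin 2) ℝ).PosSemidef) :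
    0 ≤ a ∧ 0 ≤ c ∧ b^2 ≤ a*c := by
  replace h := Matrix.posSemidef_iff_dotProduct_mulVec.1 h
  have h0 := h.2 ![1,0]
  have h1 := h.2 ![0,1]
  have h2 := h.2 ![b, -a]
  have h3 := h.2 ![c, -b]
  have h4 := h.2 ![1, -1]
  have h5 := h.2 ![1, 1]
  simp [Matrix.mulVec, dotProduct, Fin.sum_univ_two] at h0 h1 h2 h3 h4 h5
  refine ⟨h0, h1, ?_⟩
  by_contra hlt
  push_neg at hlt
  have ha0 : a = 0 := le_antisymm (by nlinarith) h0
  have hc0 : c = 0 := le_antisymm (by nlinarith) h1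
  have : b = 0 := by nlinarith
  nlinarith

/-- The set `C` given by the extended linear matrix inequality equals the conic hull
of the projection `S` of the spectrahedron. -/
theorem lifted_set_eq_conicHull {n m k : ℕ}
    (A : Matrix (Fin k) (Fin k) ℝ)
    (B : Fin n → Matrix (Fin k) (Fin k) ℝ) (C : Fin m → Matrix (Fin k) (Fin k) ℝ)
    (hA : A.IsSymm) (hB : ∀ i, (B i).IsSymm) (hC : ∀ j, (C j).IsSymm) :
    {x : Fin n → ℝ | ∃ lam r : ℝ, ∃ z : Fin m → ℝ,
        (lam • A + ∑ i, x i • B i + ∑ j, z j • C j).PosSemidef ∧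
        ∀ i, (!![lam, x i; x i, r]).PosSemidef} =
      conicHullSet {x : Fin n → ℝ | ∃ z : Fin m → ℝ,
        (A + ∑ i, x i • B i + ∑ j, z j • C j).PosSemidef} := by
  ext x
  constructor
  · rintro ⟨lam, r, z, hbig, h2⟩
    by_cases hx : x = 0
    · subst hx
      exact ⟨0, ![], ![], fun i => i.elim0, fun i => i.elim0, by simp⟩
    · obtain ⟨i0, hi0⟩ : ∃ i, x i ≠ 0 := by
        by_contra h
        push_neg at h
        exact hx (funext h)
      obtain ⟨hlam0, hr0, hd⟩ := psd2_elim (h2 i0)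
      have hlam : 0 < lam := by
        rcases hlam0.lt_or_eq with h | h
        · exact h
        · exfalso; rw [← h] at hd; simp at hd
          exact hi0 hd
      refine ⟨1, fun _ => lam, fun _ => lam⁻¹ • x, fun _ => hlam.le, fun _ => ?_, ?_⟩
      · refine ⟨lam⁻¹ • z, ?_⟩
        have key : A + (∑ i, (lam⁻¹ • x) i • B i) + ∑ j, (lam⁻¹ • z) j • C j
            = lam⁻¹ • (lam • A + ∑ i, x i • B i + ∑ j, z j • C j) := by
          rw [smul_add, smul_add, smul_smul, inv_mul_cancel₀ hlam.ne', one_smul,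
            Finset.smul_sum, Finset.smul_sum]
          simp [smul_smul]
        rw [key]
        exact psd_smul' hbig (inv_nonneg.2 hlam.le)
      · funext i
        simp [smul_smul, mul_inv_cancel₀ hlam.ne']
  · rintro ⟨N, c, s, hc0, hs, rfl⟩
    choose w hw using hs
    set lam : ℝ := ∑ p, c p with hlamdef
    by_cases hlam : lam = 0
    · have hczero : ∀ p, c p = 0 := by
        intro p
        have := (Finset.sum_eq_zero_iff_of_nonneg (fun q _ => hc0 q)).1 hlam p (Finset.mem_univ p)
        exact this
      have hx0 : (∑ p, c p • s p) = (0 : Fin n → ℝ) := by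
        simp [hczero]
      rw [hx0]
      refine ⟨0, 0, 0, by simp [Matrix.PosSemidef.zero], fun i => ?_⟩
      simpa using psd2_mk (le_refl (0:ℝ)) (le_refl (0:ℝ)) (by norm_num)
    · have hlampos : 0 < lam := lt_of_le_of_ne (Finset.sum_nonneg fun p _ => hc0 p) (Ne.symm hlam)
      set x : Fin n → ℝ := ∑ p, c p • s p with hxdef
      refine ⟨lam, (∑ i, (x i)^2) / lam, fun j => ∑ p, c p * w p j, ?_, ?_⟩
      · have key : lam • A + (∑ i, x i • B i) + ∑ j, (∑ p, c p * w p j) • C j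
            = ∑ p, c p • (A + (∑ i, s p i • B i) + ∑ j, w p j • C j) := by
          simp only [smul_add, Finset.smul_sum, Finset.sum_add_distrib, smul_smul,
            hxdef, Finset.sum_apply, Pi.smul_apply, smul_eq_mul, Finset.sum_smul, hlamdef]
          rw [Finset.sum_comm (γ := Fin n), Finset.sum_comm (γ := Fin m)]
        rw [key]
        exact psd_sum' fun p => psd_smul' (hw p) (hc0 p)
      · intro i
        refine psd2_mk hlampos.le (div_nonneg (Finset.sum_nonneg fun j _ => sq_nonneg _) hlampos.le) ?_
        rw [mul_div_cancel₀ _ hlam]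
        exact Finset.single_le_sum (fun j _ => sq_nonneg (x j)) (Finset.mem_univ i)
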